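/- arXiv:1602.03059 — 4 statements merged into one kernel-verified Lean document; each statement's English description precedes it below -/
import Mathlib

section
/- Let λ ∈ ℝ, λ ≠ 0, and let g : [0,T] → ℂ be continuous with g(T) = 0 (for λ = 0 no extra condition needed). Suppose θ : [0,T] → ℂ is C¹ with θ(0)=0 and satisfies θ'(t) + ∫ₜ^T e^{−iλ(s−t)}(θ(s) − iλθ'(s)) ds = g(t). Let v : [0,T] → ℂ be continuous and define w(t) = ∫₀ᵗ e^{−iλs} v(t−s) ds. Then ∫₀^T [θ(t) w(t) + θ'(t) w'(t)] dt = ∫₀^T g(t) v(t) dt. -/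
open intervalIntegral Set

/-
Both time integrals solve scalar linear ODEs (Duhamel's formula). With `c = iλ` and
`φ = θ - c θ'`, `w` solves `w' = -c w + v`, `w 0 = 0`, and minus the Volterra term,
`K t = -∫ₜ^T e^{c (t - s)} φ s ds`, solves `K' = c K + φ`, `K T = 0`. Hence `(K w)' = φ w + K v`
has zero integral over `[0, T]`, while the Volterra equation `θ' - K = g` gives
`θ w + θ' w' = φ w + θ' v = g v + (φ w + K v)`.
-/

noncomputable def duhamel (c : ℂ) (a : ℝ) (f : ℝ → ℂ) (t : ℝ) : ℂ :=
  Complex.exp (c * t) * ∫ s in a..t, Complex.exp (-(c * s)) * f s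

section Duhamel

variable {c : ℂ} {a : ℝ} {f : ℝ → ℂ}

@[simp]
theorem duhamel_self (c : ℂ) (a : ℝ) (f : ℝ → ℂ) : duhamel c a f a = 0 := by
  simp [duhamel]

theorem hasDerivAt_cexp_mul_ofReal (c : ℂ) (t : ℝ) :
    HasDerivAt (fun t : ℝ => Complex.exp (c * t)) (c * Complex.exp (c * t)) t := by
  simpa [mul_comm] using ((Complex.ofRealCLM.hasDerivAt (x := t)).const_mul c).cexp

theorem hasDerivAt_duhamel (hf : Continuous f) (t : ℝ) :
    HasDerivAt (duhamel c a f) (c * duhamel c a f t + f t) t := by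
  have hint : Continuous fun s : ℝ => Complex.exp (-(c * s)) * f s := by fun_prop
  have hprim := integral_hasDerivAt_right (hint.intervalIntegrable a t)
    (hint.stronglyMeasurableAtFilter _ _) hint.continuousAt
  refine ((hasDerivAt_cexp_mul_ofReal c t).fun_mul hprim).congr_deriv ?_
  have hinv : Complex.exp (c * t) * Complex.exp (-(c * t)) = 1 := by
    rw [← Complex.exp_add, add_neg_cancel, Complex.exp_zero]
  rw [duhamel]
  linear_combination f t * hinv

theorem deriv_duhamel (hf : Continuous f) (t : ℝ) :
    deriv (duhamel c a f) t = c * duhamel c a f t + f t :=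
  (hasDerivAt_duhamel hf t).deriv

theorem continuous_duhamel (hf : Continuous f) : Continuous (duhamel c a f) :=
  continuous_iff_continuousAt.2 fun t => (hasDerivAt_duhamel hf t).continuousAt

theorem integral_cexp_mul_comp_sub (c : ℂ) (f : ℝ → ℂ) (t : ℝ) :
    ∫ s in (0 : ℝ)..t, Complex.exp (c * s) * f (t - s) = duhamel c 0 f t := by
  have hsub := integral_comp_sub_left (a := 0) (b := t)
    (fun u : ℝ => Complex.exp (c * ↑(t - u)) * f u) t
  simp only [sub_sub_cancel, sub_self, sub_zero] at hsub
  rw [duhamel, ← integral_const_mul, hsub]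
  refine integral_congr fun u _ => ?_
  simp only [← mul_assoc, ← Complex.exp_add]
  push_cast
  ring_nf

theorem integral_cexp_neg_mul_sub (c : ℂ) (f : ℝ → ℂ) (t b : ℝ) :
    ∫ s in t..b, Complex.exp (-(c * (s - t))) * f s = -duhamel c b f t := by
  rw [duhamel, integral_symm, ← integral_const_mul, neg_inj]
  refine integral_congr fun s _ => ?_
  simp only [← mul_assoc, ← Complex.exp_add]
  ring_nf

/-- The Duhamel operators of `c` started at `b` and of `-c` started at `a` are adjoint on `[a, b]`. -/
theorem integral_mul_duhamel_add_duhamel_mul_eq_zero {φ v : ℝ → ℂ} (hφ : Continuous φ)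
    (hv : Continuous v) (a b : ℝ) :
    ∫ t in a..b, (φ t * duhamel (-c) a v t + duhamel c b φ t * v t) = 0 := by
  have hderiv : ∀ t, HasDerivAt (fun t => duhamel c b φ t * duhamel (-c) a v t)
      (φ t * duhamel (-c) a v t + duhamel c b φ t * v t) t := by
    intro t
    refine ((hasDerivAt_duhamel hφ t).fun_mul (hasDerivAt_duhamel hv t)).congr_deriv ?_
    ring
  have hcont : Continuous fun t => φ t * duhamel (-c) a v t + duhamel c b φ t * v t := by
    have := continuous_duhamel (c := -c) (a := a) hv
    have := continuous_duhamel (c := c) (a := b) hφ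
    fun_prop
  rw [integral_eq_sub_of_hasDerivAt (fun t _ => hderiv t) (hcont.intervalIntegrable a b)]
  simp

end Duhamel

theorem stmt_5_general (T lam : ℝ) (hT : 0 ≤ T)
    (g θ v : ℝ → ℂ)
    (hθ : ContDiff ℝ 1 θ)
    (hvolterra : ∀ t ∈ Icc 0 T,
      deriv θ t + (∫ s in t..T, Complex.exp (-(Complex.I * (lam : ℂ) * ((s : ℂ) - (t : ℂ)))) *
        (θ s - Complex.I * (lam : ℂ) * deriv θ s)) = g t)
    (hv : Continuous v) (w : ℝ → ℂ)
    (hw : ∀ t : ℝ, w t = ∫ s in (0:ℝ)..t, Complex.exp (-(Complex.I * (lam : ℂ) * (s : ℂ))) * v (t - s)) :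
    ∫ t in (0:ℝ)..T, (θ t * w t + deriv θ t * deriv w t) = ∫ t in (0:ℝ)..T, g t * v t := by
  set c : ℂ := Complex.I * lam
  set φ : ℝ → ℂ := fun t => θ t - c * deriv θ t
  set K := duhamel c T φ
  have hθ' : Continuous (deriv θ) := hθ.continuous_deriv le_rfl
  have hφ : Continuous φ := by have := hθ.continuous; fun_prop
  have hK : Continuous K := continuous_duhamel hφ
  have hw_eq : w = duhamel (-c) 0 v := funext fun t => by
    simpa only [hw, neg_mul] using integral_cexp_mul_comp_sub (-c) v t
  have hKg : ∀ t ∈ uIcc 0 T, (deriv θ t - K t) * v t = g t * v t := fun t ht => by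
    rw [← hvolterra t (uIcc_of_le hT ▸ ht), integral_cexp_neg_mul_sub, sub_eq_add_neg]
  calc ∫ t in (0:ℝ)..T, (θ t * w t + deriv θ t * deriv w t)
      = ∫ t in (0:ℝ)..T, ((deriv θ t - K t) * v t + (φ t * w t + K t * v t)) := by
        congr 1 with t
        rw [hw_eq, deriv_duhamel hv]
        ring
    _ = ∫ t in (0:ℝ)..T, (deriv θ t - K t) * v t := by
        have hW := continuous_duhamel (c := -c) (a := 0) hv
        rw [hw_eq, integral_add ((by fun_prop : Continuous _).intervalIntegrable _ _)
          ((by fun_prop : Continuous _).intervalIntegrable _ _),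
          integral_mul_duhamel_add_duhamel_mul_eq_zero hφ hv, add_zero]
    _ = ∫ t in (0:ℝ)..T, g t * v t := integral_congr hKg

theorem stmt_5 (T lam : ℝ) (hT : 0 ≤ T) (hlam : lam ≠ 0)
    (g θ v : ℝ → ℂ) (hg : ContinuousOn g (Icc 0 T)) (hgT : g T = 0)
    (hθ : ContDiff ℝ 1 θ) (hθ0 : θ 0 = 0)
    (hvolterra : ∀ t ∈ Icc 0 T,
      deriv θ t + (∫ s in t..T, Complex.exp (-(Complex.I * (lam : ℂ) * ((s : ℂ) - (t : ℂ)))) *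
        (θ s - Complex.I * (lam : ℂ) * deriv θ s)) = g t)
    (hv : Continuous v) (w : ℝ → ℂ)
    (hw : ∀ t : ℝ, w t = ∫ s in (0:ℝ)..t, Complex.exp (-(Complex.I * (lam : ℂ) * (s : ℂ))) * v (t - s)) :
    ∫ t in (0:ℝ)..T, (θ t * w t + deriv θ t * deriv w t) = ∫ t in (0:ℝ)..T, g t * v t :=
  stmt_5_general T lam hT g θ v hθ hvolterra hv w hw
end

section
/- Let λ ∈ ℝ, g : [0,T] → ℂ continuous, and suppose θ : [0,T] → ℂ is C¹ with θ(0) = 0 satisfying θ'(t) = g(t) − ∫ₜ^T e^{−iλ(s−t)}(θ(s) − iλ θ'(s)) ds. If g ≡ 0 on [0,T], then θ ≡ 0 on [0,T]. -/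
/-!
With `g = 0`, the Volterra equation says `θ' = -V`, where `V t = ∫ₜᵀ e^{-iλ(s-t)} (θ - iλθ')(s) ds`.
Differentiating in `t`, the kernel contributes `iλ V`, which cancels the `-iλθ'` term, so
`θ'' = θ` on `[0, T]`, with `θ(0) = 0` and `θ'(T) = -V(T) = 0`. For this boundary value problem
`∫₀ᵀ (|θ|² + |θ'|²) = [Re(θ̄ θ')]₀ᵀ = 0`, hence `θ = 0`.
-/

open intervalIntegral Set

theorem eqOn_zero_of_hasDerivAt_swap {E : Type*} [NormedAddCommGroup E]
    [InnerProductSpace ℝ E] {θ ψ : ℝ → E} {a b : ℝ}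
    (hθ : ∀ t ∈ Icc a b, HasDerivAt θ (ψ t) t) (hψ : ∀ t ∈ Icc a b, HasDerivAt ψ (θ t) t)
    (ha : θ a = 0) (hb : ψ b = 0) : EqOn θ 0 (Icc a b) := by
  intro t ht
  by_contra hθt
  have hat : a < t := lt_of_le_of_ne ht.1 (by rintro rfl; exact hθt ha)
  have hab : a < b := hat.trans_le ht.2
  have hderiv : ∀ s ∈ uIcc a b, HasDerivAt (fun s => inner ℝ (θ s) (ψ s))
      (inner ℝ (θ s) (θ s) + inner ℝ (ψ s) (ψ s)) s := fun s hs => by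
    rw [uIcc_of_le hab.le] at hs
    exact (hθ s hs).inner ℝ (hψ s hs)
  have hcont : ContinuousOn (fun s => inner ℝ (θ s) (θ s) + inner ℝ (ψ s) (ψ s)) (Icc a b) := by
    have hθc : ContinuousOn θ (Icc a b) := fun s hs => (hθ s hs).continuousAt.continuousWithinAt
    have hψc : ContinuousOn ψ (Icc a b) := fun s hs => (hψ s hs).continuousAt.continuousWithinAt
    exact (hθc.inner hθc).add (hψc.inner hψc)
  have hzero : ∫ s in a..b, (inner ℝ (θ s) (θ s) + inner ℝ (ψ s) (ψ s)) = 0 := by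
    rw [integral_eq_sub_of_hasDerivAt hderiv
      (hcont.intervalIntegrable_of_Icc hab.le), ha, hb, inner_zero_left, inner_zero_right, sub_zero]
  have hpos : 0 < ∫ s in a..b, (inner ℝ (θ s) (θ s) + inner ℝ (ψ s) (ψ s)) :=
    integral_pos hab hcont (fun s _ => add_nonneg real_inner_self_nonneg real_inner_self_nonneg)
      ⟨t, ht, add_pos_of_pos_of_nonneg (real_inner_self_pos.mpr hθt) real_inner_self_nonneg⟩
  exact hpos.ne' hzero

theorem hasDerivAt_integral_exp_mul_sub (μ : ℂ) {f : ℝ → ℂ} (hf : Continuous f) (b t : ℝ) :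
    HasDerivAt (fun t : ℝ => ∫ s in t..b, Complex.exp (-(μ * ((s : ℂ) - (t : ℂ)))) * f s)
      (μ * (∫ s in t..b, Complex.exp (-(μ * ((s : ℂ) - (t : ℂ)))) * f s) - f t) t := by
  have hsplit : ∀ t : ℝ, (∫ s in t..b, Complex.exp (-(μ * ((s : ℂ) - (t : ℂ)))) * f s) =
      Complex.exp (μ * t) * ∫ s in t..b, Complex.exp (-(μ * s)) * f s := fun t => by
    rw [← integral_const_mul]
    refine integral_congr fun s _ => ?_
    rw [← mul_assoc, ← Complex.exp_add]
    ring_nf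
  have hc : Continuous fun s : ℝ => Complex.exp (-(μ * s)) * f s := by fun_prop
  have hexp : HasDerivAt (fun t : ℝ => Complex.exp (μ * t)) (μ * Complex.exp (μ * t)) t := by
    simpa [mul_comm] using ((Complex.ofRealCLM.hasDerivAt (x := t)).const_mul μ).cexp
  have hint := integral_hasDerivAt_left (hc.intervalIntegrable t b)
    (hc.stronglyMeasurableAtFilter _ _) hc.continuousAt
  simp_rw [hsplit]
  refine (hexp.mul hint).congr_deriv ?_
  have hinv : Complex.exp (μ * t) * Complex.exp (-(μ * t)) = 1 := by
    rw [← Complex.exp_add, add_neg_cancel, Complex.exp_zero]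
  linear_combination -f t * hinv

theorem stmt_10_general (T lam : ℝ) (θ g : ℝ → ℂ)
    (hθ : ContDiff ℝ 1 θ) (hθ0 : θ 0 = 0)
    (hvolterra : ∀ t ∈ Icc 0 T,
      deriv θ t = g t - ∫ s in t..T, Complex.exp (-(Complex.I * (lam : ℂ) * ((s : ℂ) - (t : ℂ)))) *
        (θ s - Complex.I * (lam : ℂ) * deriv θ s))
    (hg0 : ∀ t ∈ Icc 0 T, g t = 0) :
    ∀ t ∈ Icc 0 T, θ t = 0 := by
  set V : ℝ → ℂ := fun t => ∫ s in t..T,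
    Complex.exp (-(Complex.I * (lam : ℂ) * ((s : ℂ) - (t : ℂ)))) *
      (θ s - Complex.I * (lam : ℂ) * deriv θ s)
  have hθ' : ∀ t ∈ Icc 0 T, deriv θ t = -V t := fun t ht => by
    rw [hvolterra t ht, hg0 t ht, zero_sub]
  have hV := hasDerivAt_integral_exp_mul_sub (Complex.I * lam)
    (f := fun s => θ s - Complex.I * lam * deriv θ s)
    (by have := hθ.continuous_deriv le_rfl; fun_prop) T
  refine eqOn_zero_of_hasDerivAt_swap (ψ := fun t => -V t) (fun t ht => ?_)
    (fun t ht => ((hV t).neg).congr_deriv ?_) hθ0 (by simp [V])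
  · rw [← hθ' t ht]
    exact (hθ.differentiable one_ne_zero t).hasDerivAt
  · simp only [hθ' t ht]
    ring

theorem stmt_10 (T lam : ℝ) (hT : 0 ≤ T) (θ g : ℝ → ℂ)
    (hθ : ContDiff ℝ 1 θ) (hθ0 : θ 0 = 0) (hg : ContinuousOn g (Icc 0 T))
    (hvolterra : ∀ t ∈ Icc 0 T,
      deriv θ t = g t - ∫ s in t..T, Complex.exp (-(Complex.I * (lam : ℂ) * ((s : ℂ) - (t : ℂ)))) *
        (θ s - Complex.I * (lam : ℂ) * deriv θ s))
    (hg0 : ∀ t ∈ Icc 0 T, g t = 0) :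
    ∀ t ∈ Icc 0 T, θ t = 0 :=
  stmt_10_general T lam θ g hθ hθ0 hvolterra hg0
end

section
/- Let a, b : [0,T] → ℝ with a nonnegative, continuous, and differentiable, a(0) = 0, and suppose a'(t) ≤ 2Kα √(a(t)) + L α² for constants K, L ≥ 0, α > 0. Then √(a(t)) ≤ (K t + √(L t)) α for all t ∈ [0,T]; in particular sup_{[0,T]} √(a) = O(α). -/
/-!
Compare `a` with the barrier `B x = ((K x + √(c x + δ)) α)²` for `c > L` and `δ > 0`. The shift `δ`
makes `B` differentiable at `0` with `B 0 ≥ a 0 = 0`, and the margin `c > L` makes `B' > a'` wherever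
the two graphs touch, so `a ≤ B` on `[0, T]`. Letting `c ↓ L` and `δ ↓ 0` gives the bound.
-/

open Set Filter Topology

theorem hasDerivAt_sq_mul_add_sqrt {K c δ α x : ℝ} (hx : 0 < c * x + δ) :
    HasDerivAt (fun y => ((K * y + √(c * y + δ)) * α) ^ 2)
      (2 * ((K * x + √(c * x + δ)) * α) * ((K + c / (2 * √(c * x + δ))) * α)) x := by
  have hlin : HasDerivAt (fun y => c * y + δ) c x := by
    simpa using ((hasDerivAt_id x).const_mul c).add_const δ
  have hmul : HasDerivAt (fun y => K * y) K x := by simpa using (hasDerivAt_id x).const_mul K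
  simpa using (((hmul.add (hlin.sqrt hx.ne')).mul_const α).fun_pow 2)

theorem mul_add_lt_barrier_slope {K L c α y q : ℝ} (hα : 0 < α) (hc : 0 ≤ c)
    (hLc : L < c) (hy : 0 ≤ y) (hq : 0 < q) :
    2 * K * α * ((y + q) * α) + L * α ^ 2 < 2 * ((y + q) * α) * ((K + c / (2 * q)) * α) := by
  have hcq : c ≤ (y + q) * (c / q) := by
    rw [mul_div_assoc', le_div_iff₀ hq]
    nlinarith [mul_nonneg hy hc]
  calc 2 * K * α * ((y + q) * α) + L * α ^ 2
      < 2 * K * α * ((y + q) * α) + c * α ^ 2 := by gcongr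
    _ ≤ 2 * K * α * ((y + q) * α) + (y + q) * (c / q) * α ^ 2 := by gcongr
    _ = 2 * ((y + q) * α) * ((K + c / (2 * q)) * α) := by field_simp

theorem sqrt_le_of_deriv_le_barrier {K L c δ α t : ℝ} {a : ℝ → ℝ} (hK : 0 ≤ K) (hα : 0 < α)
    (hc : 0 ≤ c) (hLc : L < c) (hδ : 0 < δ) (ha : Differentiable ℝ a) (ha0 : a 0 ≤ δ * α ^ 2)
    (ht : 0 ≤ t) (hineq : ∀ x ∈ Ico 0 t, deriv a x ≤ 2 * K * α * √(a x) + L * α ^ 2) :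
    √(a t) ≤ (K * t + √(c * t + δ)) * α := by
  have hpos : ∀ x, 0 ≤ x → 0 < c * x + δ := fun x hx => by positivity
  have hB := fun x (hx : 0 ≤ x) => hasDerivAt_sq_mul_add_sqrt (K := K) (α := α) (hpos x hx)
  have hB0 : a 0 ≤ ((K * 0 + √(c * 0 + δ)) * α) ^ 2 := by
    simpa [mul_pow, Real.sq_sqrt hδ.le] using ha0
  have hle := image_le_of_deriv_right_lt_deriv_boundary' ha.continuous.continuousOn
    (fun x _ => (ha x).hasDerivAt.hasDerivWithinAt) hB0
    (fun x hx => (hB x hx.1).continuousAt.continuousWithinAt)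
    (fun x hx => (hB x hx.1).hasDerivWithinAt) ?touch (right_mem_Icc.2 ht)
  · exact Real.sqrt_le_iff.2 ⟨by positivity, hle⟩
  case touch =>
    intro x hx htouch
    have hsqrt : √(a x) = (K * x + √(c * x + δ)) * α := by
      rw [htouch, Real.sqrt_sq (by positivity [hx.1])]
    calc deriv a x ≤ 2 * K * α * √(a x) + L * α ^ 2 := hineq x hx
      _ < _ := by
        rw [hsqrt]
        exact mul_add_lt_barrier_slope hα hc hLc (mul_nonneg hK hx.1)
          (Real.sqrt_pos.2 (hpos x hx.1))

theorem stmt_14_general (T K L α : ℝ) (hK : 0 ≤ K) (hL : 0 ≤ L) (hα : 0 < α)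
    (a : ℝ → ℝ) (ha : ContDiff ℝ 1 a) (ha0 : a 0 = 0)
    (hineq : ∀ t ∈ Icc 0 T, deriv a t ≤ 2 * K * α * Real.sqrt (a t) + L * α ^ 2) :
    ∀ t ∈ Icc 0 T, Real.sqrt (a t) ≤ (K * t + Real.sqrt (L * t)) * α := by
  intro t ht
  have hbound : ∀ ε ∈ Ioi (0 : ℝ), √(a t) ≤ (K * t + √((L + ε) * t + ε)) * α := fun ε hε =>
    sqrt_le_of_deriv_le_barrier hK hα (by positivity [hε.out.le]) (lt_add_of_pos_right L hε) hε
      (ha.differentiable one_ne_zero) (by rw [ha0]; positivity [hε.out.le]) ht.1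
      (fun x hx => hineq x ⟨hx.1, hx.2.le.trans ht.2⟩)
  have hlim : Tendsto (fun ε => (K * t + √((L + ε) * t + ε)) * α) (𝓝[>] 0)
      (𝓝 ((K * t + √(L * t)) * α)) :=
    (Continuous.tendsto' (by fun_prop) 0 _ (by simp)).mono_left nhdsWithin_le_nhds
  exact ge_of_tendsto hlim (eventually_nhdsWithin_of_forall hbound)

theorem stmt_14 (T K L α : ℝ) (hT : 0 ≤ T) (hK : 0 ≤ K) (hL : 0 ≤ L) (hα : 0 < α)
    (a : ℝ → ℝ) (ha : ContDiff ℝ 1 a) (ha0 : a 0 = 0)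
    (hpos : ∀ t ∈ Icc 0 T, 0 ≤ a t)
    (hineq : ∀ t ∈ Icc 0 T, deriv a t ≤ 2 * K * α * Real.sqrt (a t) + L * α ^ 2) :
    ∀ t ∈ Icc 0 T, Real.sqrt (a t) ≤ (K * t + Real.sqrt (L * t)) * α :=
  stmt_14_general T K L α hK hL hα a ha ha0 hineq
end

section
/- Let λ ∈ ℝ and θ, v : [0,T] → ℂ with θ C¹, θ(0)=0, v continuous. Set W(t) = ∫₀ᵗ e^{−iλs} v(t−s) ds and G(t) = θ'(t) + ∫ₜ^T e^{−iλ(s−t)}(θ(s) − iλ θ'(s)) ds. Then ∫₀^T θ(t) W(t) dt + ∫₀^T θ'(t)(v(t) − iλ e^{−iλt}∫₀ᵗ e^{iλz} v(z) dz) dt = ∫₀^T G(t) v(t) dt. -/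
open intervalIntegral Set

open MeasureTheory in
lemma triangle_swap (T : ℝ) (hT : 0 ≤ T) (f : ℝ → ℝ → ℂ)
    (hf : Continuous fun p : ℝ × ℝ => f p.1 p.2) :
    (∫ t in (0:ℝ)..T, ∫ z in (0:ℝ)..t, f t z) = ∫ z in (0:ℝ)..T, ∫ t in z..T, f t z := by
  haveI : IsFiniteMeasure (volume.restrict (Ioc (0:ℝ) T)) :=
    ⟨by rw [Measure.restrict_apply_univ]; exact measure_Ioc_lt_top⟩
  set F : ℝ × ℝ → ℂ := ({p : ℝ × ℝ | p.2 < p.1}).indicator (fun p => f p.1 p.2) with hFdef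
  have hS : MeasurableSet {p : ℝ × ℝ | p.2 < p.1} :=
    (isOpen_lt continuous_snd continuous_fst).measurableSet
  have hFmeas : AEStronglyMeasurable F
      ((volume.restrict (Ioc (0:ℝ) T)).prod (volume.restrict (Ioc (0:ℝ) T))) :=
    (hf.stronglyMeasurable.indicator hS).aestronglyMeasurable
  obtain ⟨C, hC⟩ := (isCompact_Icc.prod isCompact_Icc :
      IsCompact (Icc (0:ℝ) T ×ˢ Icc (0:ℝ) T)).exists_bound_of_continuousOn hf.continuousOn
  have hint : Integrable F
      ((volume.restrict (Ioc (0:ℝ) T)).prod (volume.restrict (Ioc (0:ℝ) T))) := by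
    refine Integrable.mono' (integrable_const C) hFmeas ?_
    rw [Measure.prod_restrict]
    filter_upwards [self_mem_ae_restrict (measurableSet_Ioc.prod measurableSet_Ioc)] with p hp
    rcases hp with ⟨hp1, hp2⟩
    calc ‖F p‖ ≤ ‖f p.1 p.2‖ := norm_indicator_le_norm_self _ p
      _ ≤ C := hC p ⟨Ioc_subset_Icc_self hp1, Ioc_subset_Icc_self hp2⟩
  have key : (∫ t in Ioc (0:ℝ) T, ∫ z in Ioc (0:ℝ) T, F (t, z))
      = ∫ z in Ioc (0:ℝ) T, ∫ t in Ioc (0:ℝ) T, F (t, z) :=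
    integral_integral_swap hint
  have hL : (∫ t in (0:ℝ)..T, ∫ z in (0:ℝ)..t, f t z)
      = ∫ t in Ioc (0:ℝ) T, ∫ z in Ioc (0:ℝ) T, F (t, z) := by
    rw [intervalIntegral.integral_of_le hT]
    refine setIntegral_congr_fun measurableSet_Ioc (fun t ht => ?_)
    have h1 : (fun z => F (t, z)) = (Iio t).indicator (fun z => f t z) := by
      funext z
      by_cases h : z < t <;> simp [hFdef, Set.indicator_apply, h]
    rw [h1, setIntegral_indicator measurableSet_Iio]
    have h2 : Ioc (0:ℝ) T ∩ Iio t = Ioo 0 t := by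
      ext z
      constructor
      · rintro ⟨⟨hz0, _⟩, hzt⟩; exact ⟨hz0, hzt⟩
      · rintro ⟨hz0, hzt⟩; exact ⟨⟨hz0, hzt.le.trans ht.2⟩, hzt⟩
    rw [h2, ← integral_Ioc_eq_integral_Ioo, intervalIntegral.integral_of_le ht.1.le]
  have hR : (∫ z in (0:ℝ)..T, ∫ t in z..T, f t z)
      = ∫ z in Ioc (0:ℝ) T, ∫ t in Ioc (0:ℝ) T, F (t, z) := by
    rw [intervalIntegral.integral_of_le hT]
    refine setIntegral_congr_fun measurableSet_Ioc (fun z hz => ?_)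
    have h1 : (fun t => F (t, z)) = (Ioi z).indicator (fun t => f t z) := by
      funext t
      by_cases h : z < t <;> simp [hFdef, Set.indicator_apply, h]
    rw [h1, setIntegral_indicator measurableSet_Ioi]
    have h2 : Ioc (0:ℝ) T ∩ Ioi z = Ioc z T := by
      ext t
      constructor
      · rintro ⟨⟨_, htT⟩, hzt⟩; exact ⟨hzt, htT⟩
      · rintro ⟨hzt, htT⟩; exact ⟨⟨hz.1.trans hzt, htT⟩, hzt⟩
    rw [h2, intervalIntegral.integral_of_le hz.2]
  rw [hL, hR, key]

theorem stmt_15 (T lam : ℝ) (hT : 0 ≤ T)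
    (θ v : ℝ → ℂ) (hθ : ContDiff ℝ 1 θ) (hθ0 : θ 0 = 0) (hv : Continuous v)
    (W G : ℝ → ℂ)
    (hW : ∀ t : ℝ, W t = ∫ s in (0:ℝ)..t, Complex.exp (-(Complex.I * (lam : ℂ) * (s : ℂ))) * v (t - s))
    (hG : ∀ t : ℝ, G t = deriv θ t +
      ∫ s in t..T, Complex.exp (-(Complex.I * (lam : ℂ) * ((s : ℂ) - (t : ℂ)))) *
        (θ s - Complex.I * (lam : ℂ) * deriv θ s)) :
    (∫ t in (0:ℝ)..T, θ t * W t) +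
      (∫ t in (0:ℝ)..T, deriv θ t *
        (v t - Complex.I * (lam : ℂ) * Complex.exp (-(Complex.I * (lam : ℂ) * (t : ℂ))) *
          ∫ z in (0:ℝ)..t, Complex.exp (Complex.I * (lam : ℂ) * (z : ℂ)) * v z)) =
    ∫ t in (0:ℝ)..T, G t * v t := by
  have hθ' : Continuous (deriv θ) := hθ.continuous_deriv le_rfl
  have hθc : Continuous θ := hθ.continuous
  set c : ℝ → ℂ := fun t => Complex.exp (-(Complex.I * (lam : ℂ) * (t : ℂ))) with hc
  set e : ℝ → ℂ := fun z => Complex.exp (Complex.I * (lam : ℂ) * (z : ℂ)) with he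
  have hcc : Continuous c := by rw [hc]; fun_prop
  have hec : Continuous e := by rw [he]; fun_prop
  have hce : ∀ t z : ℝ, c t * e z
      = Complex.exp (-(Complex.I * (lam : ℂ) * ((t : ℂ) - (z : ℂ)))) := by
    intro t z
    simp only [hc, he]
    rw [← Complex.exp_add]
    congr 1
    ring
  set A : ℝ → ℂ := fun t => (θ t - Complex.I * (lam : ℂ) * deriv θ t) * c t with hA
  have hAc : Continuous A := by
    rw [hA]; exact (hθc.sub (continuous_const.mul hθ')).mul hcc
  set P : ℝ → ℂ := fun t => ∫ z in (0:ℝ)..t, e z * v z with hP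
  have hPc : Continuous P := by
    rw [hP]
    exact intervalIntegral.continuous_primitive
      (fun a b => (hec.mul hv).intervalIntegrable a b) 0
  set Q : ℝ → ℂ := fun z => ∫ t in z..T, A t with hQ
  have hQc : Continuous Q := by
    have h1 : Q = fun z => (∫ t in (0:ℝ)..T, A t) - ∫ t in (0:ℝ)..z, A t := by
      funext z
      rw [hQ, eq_sub_iff_add_eq, add_comm]
      exact intervalIntegral.integral_add_adjacent_intervals
        (hAc.intervalIntegrable 0 z) (hAc.intervalIntegrable z T)
    rw [h1]
    exact continuous_const.sub
      (intervalIntegral.continuous_primitive (fun a b => hAc.intervalIntegrable a b) 0)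
  -- W in terms of c and P
  have hW' : ∀ t : ℝ, W t = c t * P t := by
    intro t
    rw [hW t]
    have h1 : (∫ s in (0:ℝ)..t, Complex.exp (-(Complex.I * (lam : ℂ) * (s : ℂ))) * v (t - s))
        = ∫ s in (0:ℝ)..t,
            (fun u : ℝ => Complex.exp (-(Complex.I * (lam : ℂ) * ((t : ℂ) - (u : ℂ)))) * v u)
              (t - s) := by
      refine intervalIntegral.integral_congr fun s hs => ?_
      simp only
      congr 2
      push_cast
      ring
    rw [h1, intervalIntegral.integral_comp_sub_left
      (fun u : ℝ => Complex.exp (-(Complex.I * (lam : ℂ) * ((t : ℂ) - (u : ℂ)))) * v u) t]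
    simp only [sub_self, sub_zero]
    rw [hP]
    simp only
    rw [← intervalIntegral.integral_const_mul]
    refine intervalIntegral.integral_congr fun z hz => ?_
    rw [← mul_assoc, hce t z]
  -- integrability facts
  have int1 : IntervalIntegrable (fun t => θ t * c t * P t) MeasureTheory.volume 0 T :=
    ((hθc.mul hcc).mul hPc).intervalIntegrable 0 T
  have int2 : IntervalIntegrable
      (fun t => deriv θ t * v t - deriv θ t * (Complex.I * (lam : ℂ)) * (c t * P t))
      MeasureTheory.volume 0 T :=
    ((hθ'.mul hv).sub (((hθ'.mul continuous_const)).mul (hcc.mul hPc))).intervalIntegrable 0 T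
  have intAP : IntervalIntegrable (fun t => A t * P t) MeasureTheory.volume 0 T :=
    (hAc.mul hPc).intervalIntegrable 0 T
  have intθ'v : IntervalIntegrable (fun t => deriv θ t * v t) MeasureTheory.volume 0 T :=
    (hθ'.mul hv).intervalIntegrable 0 T
  have intQev : IntervalIntegrable (fun z => Q z * (e z * v z)) MeasureTheory.volume 0 T :=
    (hQc.mul (hec.mul hv)).intervalIntegrable 0 T
  -- Step 1: rewrite first integral
  have step1 : (∫ t in (0:ℝ)..T, θ t * W t) = ∫ t in (0:ℝ)..T, θ t * c t * P t := by
    refine intervalIntegral.integral_congr fun t ht => ?_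
    rw [hW' t, mul_assoc]
  -- Step 2: rewrite second integral
  have step2 : (∫ t in (0:ℝ)..T, deriv θ t *
        (v t - Complex.I * (lam : ℂ) * Complex.exp (-(Complex.I * (lam : ℂ) * (t : ℂ))) *
          ∫ z in (0:ℝ)..t, Complex.exp (Complex.I * (lam : ℂ) * (z : ℂ)) * v z))
      = ∫ t in (0:ℝ)..T,
          (deriv θ t * v t - deriv θ t * (Complex.I * (lam : ℂ)) * (c t * P t)) := by
    refine intervalIntegral.integral_congr fun t ht => ?_
    simp only [hc, he, hP]
    ring
  -- combine LHS
  have comb : (∫ t in (0:ℝ)..T, θ t * c t * P t) +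
      (∫ t in (0:ℝ)..T,
        (deriv θ t * v t - deriv θ t * (Complex.I * (lam : ℂ)) * (c t * P t)))
      = (∫ t in (0:ℝ)..T, A t * P t) + ∫ t in (0:ℝ)..T, deriv θ t * v t := by
    rw [← intervalIntegral.integral_add int1 int2, ← intervalIntegral.integral_add intAP intθ'v]
    refine intervalIntegral.integral_congr fun t ht => ?_
    simp only [hA]
    ring
  -- Fubini step
  have fub : (∫ t in (0:ℝ)..T, A t * P t) = ∫ z in (0:ℝ)..T, Q z * (e z * v z) := by
    have h1 : (∫ t in (0:ℝ)..T, A t * P t)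
        = ∫ t in (0:ℝ)..T, ∫ z in (0:ℝ)..t, A t * (e z * v z) := by
      refine intervalIntegral.integral_congr fun t ht => ?_
      rw [hP]
      simp only
      rw [intervalIntegral.integral_const_mul]
    have h2 := triangle_swap T hT (fun t z => A t * (e z * v z))
      ((hAc.comp continuous_fst).mul ((hec.mul hv).comp continuous_snd))
    rw [h1, h2]
    refine intervalIntegral.integral_congr fun z hz => ?_
    rw [intervalIntegral.integral_mul_const, hQ]
  -- rewrite RHS
  have rhs : (∫ t in (0:ℝ)..T, G t * v t)
      = (∫ t in (0:ℝ)..T, deriv θ t * v t) + ∫ z in (0:ℝ)..T, Q z * (e z * v z) := by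
    rw [← intervalIntegral.integral_add intθ'v intQev]
    refine intervalIntegral.integral_congr fun t ht => ?_
    rw [hG t]
    have h3 : (∫ s in t..T, Complex.exp (-(Complex.I * (lam : ℂ) * ((s : ℂ) - (t : ℂ)))) *
        (θ s - Complex.I * (lam : ℂ) * deriv θ s)) = Q t * e t := by
      rw [hQ]
      simp only
      rw [← intervalIntegral.integral_mul_const]
      refine intervalIntegral.integral_congr fun s hs => ?_
      rw [← hce s t, hA]
      ring
    rw [h3]
    ring
  rw [step1, step2, comb, fub, rhs]
  ring
end
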